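/- For each m ≥ 1, let T_m be the complete 5-partite graph on 5m vertices with all five parts of size m. Then I(K_{1,1,2}; T_m)/binom(5m,4) tends to 72/125 as m → ∞. -/

import Mathlib

open MeasureTheory Finset Filter Topology
open scoped Classical

/-- `K_{1,1,2}`: the complete tripartite graph with parts `{0}`, `{1}`, `{2,3}`,
i.e. `K₄` minus the edge `{2,3}`. -/
def K112 : SimpleGraph (Fin 4) where
  Adj u v := u ≠ v ∧ ¬(u = 2 ∧ v = 3) ∧ ¬(u = 3 ∧ v = 2)
  symm := ⟨by decide⟩
  loopless := ⟨by decide⟩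

/-- `I(H;G)`: the number of `|V(H)|`-element subsets `S` of `V(G)` such that the
subgraph of `G` induced on `S` is isomorphic to `H`. -/
noncomputable def numInduced {α β : Type*} [Fintype α] [Fintype β] [DecidableEq β]
    (H : SimpleGraph α) (G : SimpleGraph β) : ℕ :=
  (Finset.univ.filter fun S : Finset β =>
    S.card = Fintype.card α ∧ Nonempty (H ≃g G.induce (S : Set β))).card

/-- The complete 5-partite graph on `5m` vertices with all five parts of size `m`. -/
def T (m : ℕ) : SimpleGraph (Fin 5 × Fin m) where
  Adj u v := u.1 ≠ v.1
  symm := ⟨fun _ _ h => Ne.symm h⟩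
  loopless := ⟨fun _ h => h rfl⟩

/-! Four vertices of `T m` span a copy of `K_{1,1,2}` exactly when two of them share a part and
the other two lie in two further, distinct parts. Recording the part of the pair, the two other
parts, the pair and the remaining two vertices counts these sets as `5 · 6 · C(m,2) · m²`, which
is `15 m³ (m - 1)`, against `C(5m,4) = 5m (5m-1) (5m-2) (5m-3) / 24`; the ratio tends to
`360 / 5⁴ = 72 / 125`. -/

open SimpleGraph

lemma nonempty_iso_induce_iff_exists_embedding {α β : Type*} {H : SimpleGraph α}
    {G : SimpleGraph β} {s : Set β} :
    Nonempty (H ≃g G.induce s) ↔ ∃ f : H ↪g G, Set.range f = s := by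
  constructor
  · rintro ⟨e⟩
    refine ⟨(Embedding.induce s).comp e.toEmbedding, ?_⟩
    change Set.range (Subtype.val ∘ e) = s
    rw [Set.range_comp, Set.range_eq_univ.2 e.surjective, Set.image_univ, Subtype.range_coe]
  · rintro ⟨f, rfl⟩
    exact ⟨f.isoInduceRange⟩

lemma numInduced_eq_card_filter_range {α β : Type*} [Fintype α] [Fintype β] [DecidableEq β]
    (H : SimpleGraph α) (G : SimpleGraph β) :
    numInduced H G = #{S : Finset β | ∃ f : H ↪g G, Set.range f = S} := by
  refine congrArg card (filter_congr fun S _ => ?_)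
  rw [← nonempty_iso_induce_iff_exists_embedding, and_iff_right_iff_imp]
  rintro ⟨e⟩
  rw [← Fintype.card_coe, Fintype.card_congr e.toEquiv]
  rfl

lemma range_fin_four {β : Type*} (f : Fin 4 → β) : Set.range f = {f 0, f 1, f 2, f 3} := by
  ext v; simp [Fin.exists_fin_succ, eq_comm]

lemma cast_choose_four {K : Type*} [Field K] [CharZero K] (n : ℕ) :
    (n.choose 4 : K) = n * (n - 1) * (n - 2) * (n - 3) / 24 := by
  simp [Nat.cast_choose_eq_descPochhammer_div, descPochhammer_succ_eval, Nat.factorial]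

def fiber {α β : Type*} [DecidableEq α] [DecidableEq β] [Fintype β] (S : Finset (α × β))
    (a : α) : Finset β :=
  {b | (a, b) ∈ S}

def k112Parts : Finset (Fin 5 × Fin 5 × Fin 5) :=
  {t | t.2.1 < t.2.2 ∧ t.2.1 ≠ t.1 ∧ t.2.2 ≠ t.1}

lemma mem_k112Parts {i j k : Fin 5} : (i, j, k) ∈ k112Parts ↔ j < k ∧ j ≠ i ∧ k ≠ i := by
  simp [k112Parts]

lemma card_k112Parts : #k112Parts = 30 := by decide

def k112Profile (t : Fin 5 × Fin 5 × Fin 5) (u : Fin 5) : ℕ :=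
  if u = t.1 then 2 else if u = t.2.1 ∨ u = t.2.2 then 1 else 0

set_option maxRecDepth 2000 in
lemma injOn_k112Profile : Set.InjOn k112Profile k112Parts := by
  unfold Set.InjOn
  simp only [Finset.mem_coe]
  decide

def k112Data (m : ℕ) : Finset ((Fin 5 × Fin 5 × Fin 5) × Finset (Fin m) × Fin m × Fin m) :=
  k112Parts ×ˢ (univ : Finset (Fin m)).powersetCard 2 ×ˢ univ

lemma mem_k112Data {m : ℕ} {t : Fin 5 × Fin 5 × Fin 5} {P : Finset (Fin m)} {a b : Fin m} :
    (t, P, a, b) ∈ k112Data m ↔ t ∈ k112Parts ∧ #P = 2 := by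
  simp [k112Data]

lemma card_k112Data (m : ℕ) : #(k112Data m) = 30 * m.choose 2 * m ^ 2 := by
  simp [k112Data, card_k112Parts, card_powersetCard]
  ring

/-- `((i, j, k), P, a, b)` encodes the pair `P` in part `i` together with `(j, a)` and `(k, b)`;
`j < k` makes the encoding of each copy unique. -/
def k112Set {m : ℕ} : (Fin 5 × Fin 5 × Fin 5) × Finset (Fin m) × Fin m × Fin m →
    Finset (Fin 5 × Fin m)
  | ((i, j, k), P, a, b) => P.image (i, ·) ∪ {(j, a), (k, b)}

lemma coe_k112Set_pair {m : ℕ} (i j k : Fin 5) (x y a b : Fin m) :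
    (k112Set ((i, j, k), {x, y}, a, b) : Set (Fin 5 × Fin m)) =
      {(j, a), (k, b), (i, x), (i, y)} := by
  ext; simp [k112Set]; tauto

lemma fiber_k112Set {m : ℕ} {i j k : Fin 5} (hji : j ≠ i) (hki : k ≠ i) (hjk : j ≠ k)
    (P : Finset (Fin m)) (a b : Fin m) (u : Fin 5) :
    fiber (k112Set ((i, j, k), P, a, b)) u =
      if u = i then P else if u = j then {a} else if u = k then {b} else ∅ := by
  ext c
  simp only [fiber, k112Set, mem_filter, mem_univ, true_and, mem_union, mem_image, mem_insert,
    mem_singleton, Prod.mk.injEq]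
  split_ifs <;> subst_vars <;> simp_all [eq_comm]

lemma card_fiber_k112Set {m : ℕ} {i j k : Fin 5} (hijk : (i, j, k) ∈ k112Parts)
    {P : Finset (Fin m)} (hP : #P = 2) (a b : Fin m) (u : Fin 5) :
    #(fiber (k112Set ((i, j, k), P, a, b)) u) = k112Profile (i, j, k) u := by
  obtain ⟨hjk, hji, hki⟩ := mem_k112Parts.1 hijk
  rw [fiber_k112Set hji hki hjk.ne, k112Profile]
  split_ifs <;> simp_all

lemma injOn_k112Set (m : ℕ) : Set.InjOn (k112Set (m := m)) (k112Data m) := by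
  rintro ⟨⟨i, j, k⟩, P, a, b⟩ hx ⟨⟨i', j', k'⟩, P', a', b'⟩ hx' h
  obtain ⟨ht, hP⟩ := mem_k112Data.1 hx
  obtain ⟨ht', hP'⟩ := mem_k112Data.1 hx'
  have hfiber u := congrArg (fiber · u) h
  obtain ⟨rfl, rfl, rfl⟩ : i = i' ∧ j = j' ∧ k = k' := by
    simpa using injOn_k112Profile ht ht' <| funext fun u => by
      rw [← card_fiber_k112Set ht hP, hfiber, card_fiber_k112Set ht' hP']
  obtain ⟨hjk, hji, hki⟩ := mem_k112Parts.1 ht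
  have hi := hfiber i
  have hj := hfiber j
  have hk := hfiber k
  simp only [fiber_k112Set hji hki hjk.ne, if_pos, if_neg hji, if_neg hki, if_neg hjk.ne']
    at hi hj hk
  rw [hi, singleton_inj.1 hj, singleton_inj.1 hk]

lemma exists_embedding_range_eq_k112Set {m : ℕ} {x} (hx : x ∈ k112Data m) :
    ∃ f : K112 ↪g T m, Set.range f = k112Set x := by
  obtain ⟨⟨i, j, k⟩, P, a, b⟩ := x
  obtain ⟨hijk, hP⟩ := mem_k112Data.1 hx
  obtain ⟨hjk, hji, hki⟩ := mem_k112Parts.1 hijk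
  obtain ⟨x, y, hxy, rfl⟩ := card_eq_two.1 hP
  let v : Fin 4 → Fin 5 × Fin m := ![(j, a), (k, b), (i, x), (i, y)]
  have hv : Function.Injective v := by
    intro u w
    fin_cases u <;> fin_cases w <;>
      simp [v, hjk.ne, hjk.ne', hji, hki, hji.symm, hki.symm, hxy, hxy.symm]
  refine ⟨⟨⟨v, hv⟩, ?_⟩, ?_⟩
  · intro u w
    fin_cases u <;> fin_cases w <;>
      simp [v, K112, T, hjk.ne, hjk.ne', hji, hki, hji.symm, hki.symm]
  · rw [coe_k112Set_pair]
    exact range_fin_four v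

lemma exists_k112Set_eq_range {m : ℕ} (f : K112 ↪g T m) :
    ∃ x ∈ k112Data m, (k112Set x : Set (Fin 5 × Fin m)) = Set.range f := by
  have h01 : (f 0).1 ≠ (f 1).1 := f.map_adj_iff.2 (by simp [K112])
  have h02 : (f 0).1 ≠ (f 2).1 := f.map_adj_iff.2 (by simp [K112])
  have h12 : (f 1).1 ≠ (f 2).1 := f.map_adj_iff.2 (by simp [K112])
  have h23 : (f 2).1 = (f 3).1 := not_not.1 fun h => by simpa [K112] using f.map_adj_iff.1 h
  have h23' : (f 2).2 ≠ (f 3).2 := fun h => by simpa using f.injective (Prod.ext h23 h)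
  have e3 : ((f 2).1, (f 3).2) = f 3 := Prod.ext h23 rfl
  rw [range_fin_four]
  rcases h01.lt_or_gt with h | h
  · refine ⟨(((f 2).1, (f 0).1, (f 1).1), {(f 2).2, (f 3).2}, (f 0).2, (f 1).2), ?_, ?_⟩
    · simp [mem_k112Data, mem_k112Parts, h, h02, h12, card_pair h23']
    · rw [coe_k112Set_pair, e3]
  · refine ⟨(((f 2).1, (f 1).1, (f 0).1), {(f 2).2, (f 3).2}, (f 1).2, (f 0).2), ?_, ?_⟩
    · simp [mem_k112Data, mem_k112Parts, h, h02, h12, card_pair h23']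
    · rw [coe_k112Set_pair, e3, Set.insert_comm]

lemma numInduced_K112_T (m : ℕ) : numInduced K112 (T m) = 30 * m.choose 2 * m ^ 2 := by
  have : ({S : Finset (Fin 5 × Fin m) | ∃ f : K112 ↪g T m, Set.range f = S} : Finset _) =
      (k112Data m).image k112Set := by
    ext S
    simp only [mem_filter, mem_univ, true_and, mem_image]
    constructor
    · rintro ⟨f, hf⟩
      obtain ⟨x, hx, hxf⟩ := exists_k112Set_eq_range f
      exact ⟨x, hx, coe_injective (hxf.trans hf)⟩
    · rintro ⟨x, hx, rfl⟩
      exact exists_embedding_range_eq_k112Set hx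
  rw [numInduced_eq_card_filter_range, this, card_image_of_injOn (injOn_k112Set m), card_k112Data]

lemma numInduced_K112_T_div_choose {m : ℕ} (hm0 : m ≠ 0) :
    (numInduced K112 (T m) : ℝ) / (5 * m).choose 4 =
      72 * (1 - (m : ℝ)⁻¹) / ((5 - (m : ℝ)⁻¹) * (5 - 2 * (m : ℝ)⁻¹) * (5 - 3 * (m : ℝ)⁻¹)) := by
  have hm : (1 : ℝ) ≤ m := by exact_mod_cast Nat.one_le_iff_ne_zero.2 hm0
  have h1 : (5 : ℝ) * m - 1 ≠ 0 := by linarith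
  have h2 : (5 : ℝ) * m - 2 ≠ 0 := by linarith
  have h3 : (5 : ℝ) * m - 3 ≠ 0 := by linarith
  rw [numInduced_K112_T, cast_choose_four]
  push_cast [Nat.cast_choose_two]
  field_simp
  ring

/-- `I(K_{1,1,2}; T_m)/binom(5m,4) → 72/125` as `m → ∞`. -/
theorem K112_density_in_balanced_5partite :
    Tendsto (fun m : ℕ => (numInduced K112 (T m) : ℝ) / ((5 * m).choose 4))
      atTop (𝓝 (72 / 125)) := by
  have hcont : ContinuousAt
      (fun x : ℝ => 72 * (1 - x) / ((5 - x) * (5 - 2 * x) * (5 - 3 * x))) 0 := by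
    fun_prop (disch := norm_num)
  have hlim := hcont.tendsto.comp (tendsto_inv_atTop_nhds_zero_nat (𝕜 := ℝ))
  norm_num at hlim
  refine hlim.congr' ?_
  filter_upwards [eventually_ne_atTop 0] with m hm
  exact (numInduced_K112_T_div_choose hm).symm
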